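/- arXiv:1401.0691 — 5 statements merged into one kernel-verified Lean document; each statement's English description precedes it below -/
import Mathlib

section
/- A monomial of R is Λ-homogeneous of degree H if and only if it equals m_j := y_j·∏_{I∈𝓘, j∉I} x_I for some j ∈ {1,…,n−1}. Equivalently: if exponent vectors a ∈ ℕ^{n−1}, b ∈ ℕ^{𝓘} satisfy Σ_j a_j·(H − Σ_{I∈𝓘, j∉I} E_I) + Σ_{I∈𝓘} b_I·E_I = H in Λ, then there is a (unique) j with a equal to the j-th standard basis vector and b_I = 1 when j ∉ I, b_I = 0 when j ∈ I. (The monomials m_j are the eigenbasis of the hyperplane class H; they are homogeneous coordinates on the ℙ^{n−2} blown up to construct X_n.) -/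
open MvPolynomial

noncomputable section

/-- The index set 𝓘: subsets `I ⊆ {1,…,n−1}` with `1 ≤ |I| ≤ n−4`. -/
abbrev Idx (n : ℕ) : Type := {I : Finset (Fin (n - 1)) // 1 ≤ I.card ∧ I.card ≤ n - 4}

/-- The variables of the Cox ring of `X_n`: the `y_i` and the `x_I`. -/
abbrev Vars (n : ℕ) : Type := Fin (n - 1) ⊕ Idx n

variable (k : Type) [CommRing k]

/-- `R = k[y_1,…,y_{n−1},(x_I)_{I∈𝓘}]`, the Cox ring of the toric variety `X_n`. -/
abbrev R (n : ℕ) : Type := MvPolynomial (Vars n) k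

/-- The variable `y_i`. -/
def yy (n : ℕ) (i : Fin (n - 1)) : R k n := X (Sum.inl i)

/-- The variable `x_I`. -/
def xx (n : ℕ) (I : Idx n) : R k n := X (Sum.inr I)

/-- `Λ = ℤ·H ⊕ ⨁_{I∈𝓘} ℤ·E_I`, the free abelian group on `H` and the `E_I`
(identified with `Pic(X_n) = Pic(M̄_{0,n})`). -/
abbrev Pic (n : ℕ) : Type := (Unit ⊕ Idx n) →₀ ℤ

/-- The hyperplane class `H`. -/
def Hc (n : ℕ) : Pic n := Finsupp.single (Sum.inl ()) 1

/-- The exceptional class `E_I`. -/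
def Ec (n : ℕ) (I : Idx n) : Pic n := Finsupp.single (Sum.inr I) 1

/-- The `Λ`-grading of `R`: `deg y_j = H − Σ_{I∈𝓘, j∉I} E_I` and `deg x_I = E_I`. -/
def wt (n : ℕ) : Vars n → Pic n :=
  Sum.elim
    (fun j => Hc n - ∑ I ∈ Finset.univ.filter (fun I : Idx n => j ∉ I.1), Ec n I)
    (fun I => Ec n I)

/-- The exponent vector of the monomial `m_j = y_j·∏_{I∈𝓘, j∉I} x_I`. -/
def mExp (n : ℕ) (j : Fin (n - 1)) : Vars n →₀ ℕ :=
  Finsupp.single (Sum.inl j) 1 +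
    ∑ I ∈ Finset.univ.filter (fun I : Idx n => j ∉ I.1),
      Finsupp.single (Sum.inr (I : Idx n)) 1

lemma wt_inl_inl (n : ℕ) (j : Fin (n-1)) : wt n (Sum.inl j) (Sum.inl ()) = 1 := by
  simp [wt, Hc, Ec, Finsupp.sub_apply, Finsupp.finset_sum_apply, Finsupp.single_apply]

lemma wt_inr_inl (n : ℕ) (I : Idx n) : wt n (Sum.inr I) (Sum.inl ()) = 0 := by
  simp [wt, Ec, Finsupp.single_apply]

lemma wt_inl_inr (n : ℕ) (j : Fin (n-1)) (I : Idx n) :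
    wt n (Sum.inl j) (Sum.inr I) = if j ∉ I.1 then -1 else 0 := by
  simp only [wt, Sum.elim_inl, Finsupp.sub_apply, Finsupp.finset_sum_apply, Hc, Ec,
    Finsupp.single_apply, Sum.inr.injEq, reduceCtorEq, if_false]
  rw [Finset.sum_ite_eq' _ I]
  simp
  split <;> simp

lemma wt_inr_inr (n : ℕ) (I' I : Idx n) :
    wt n (Sum.inr I') (Sum.inr I) = if I' = I then 1 else 0 := by
  simp [wt, Ec, Finsupp.single_apply]

lemma mExp_inl (n : ℕ) (j i : Fin (n-1)) :
    mExp n j (Sum.inl i) = if i = j then 1 else 0 := by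
  simp [mExp, Finsupp.finset_sum_apply, Finsupp.single_apply, eq_comm]

lemma mExp_inr (n : ℕ) (j : Fin (n-1)) (I : Idx n) :
    mExp n j (Sum.inr I) = if j ∉ I.1 then 1 else 0 := by
  simp only [mExp, Finsupp.add_apply, Finsupp.finset_sum_apply, Finsupp.single_apply,
    reduceCtorEq, if_false, Sum.inr.injEq, zero_add]
  rw [Finset.sum_ite_eq' _ I]
  simp

lemma weight_mExp (n : ℕ) (j : Fin (n-1)) :
    Finsupp.weight (wt n) (mExp n j) = Hc n := by
  rw [mExp, map_add, map_sum]
  have h1 : ∀ v : Vars n, Finsupp.weight (wt n) (Finsupp.single v 1) = wt n v := by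
    intro v
    rw [Finsupp.weight_apply, Finsupp.sum_single_index] <;> simp
  rw [h1]
  simp only [h1]
  simp only [wt, Sum.elim_inl, Sum.elim_inr]
  abel

/-- a monomial of `R` is `Λ`-homogeneous of degree `H` iff it is one of the
monomials `m_j = y_j·∏_{I∈𝓘, j∉I} x_I`, i.e. an exponent vector `d` has weighted degree
`H` iff `d` is the exponent vector of a (unique) `m_j`. -/
theorem stmt3 (n : ℕ) (hn : 5 ≤ n) (d : Vars n →₀ ℕ) :
    Finsupp.weight (wt n) d = Hc n ↔ ∃! j : Fin (n - 1), d = mExp n j := by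
  constructor
  · intro h
    have key : ∀ p : Unit ⊕ Idx n,
        (∑ v : Vars n, (d v : ℤ) * (wt n v p)) = Hc n p := by
      intro p
      have hp := DFunLike.congr_fun h p
      rw [Finsupp.weight_apply, Finsupp.sum_apply, Finsupp.sum_fintype] at hp
      · rw [← hp]
        apply Finset.sum_congr rfl
        intro v _
        simp [Finsupp.smul_apply]
      · intro v; simp
    -- equation at H-coordinate
    have eq1 : ∑ j : Fin (n-1), d (Sum.inl j) = 1 := by
      have := key (Sum.inl ())
      rw [Fintype.sum_sum_type] at this
      simp only [wt_inl_inl, wt_inr_inl, mul_one, mul_zero, Finset.sum_const_zero,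
        add_zero, Hc, Finsupp.single_apply, if_pos rfl] at this
      exact_mod_cast this
    obtain ⟨j₀, hj₀⟩ : ∃ j, d (Sum.inl j) ≠ 0 := by
      by_contra h'
      push_neg at h'
      simp [h'] at eq1
    have hdl : ∀ j, d (Sum.inl j) = if j = j₀ then 1 else 0 := by
      have h1 : d (Sum.inl j₀) = 1 := by
        have hle := Finset.single_le_sum (f := fun j => d (Sum.inl j))
          (fun _ _ => Nat.zero_le _) (Finset.mem_univ j₀)
        have hle' : d (Sum.inl j₀) ≤ ∑ j : Fin (n-1), d (Sum.inl j) := hle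
        rw [eq1] at hle'
        omega
      have h2 : ∑ j ∈ Finset.univ.erase j₀, d (Sum.inl j) = 0 := by
        have h3 : d (Sum.inl j₀) + ∑ j ∈ Finset.univ.erase j₀, d (Sum.inl j)
            = ∑ j : Fin (n-1), d (Sum.inl j) :=
          Finset.add_sum_erase Finset.univ (fun j => d (Sum.inl j)) (Finset.mem_univ j₀)
        omega
      intro j
      by_cases hj : j = j₀
      · simp [hj, h1]
      · rw [if_neg hj]
        exact (Finset.sum_eq_zero_iff.mp h2) j (Finset.mem_erase.mpr ⟨hj, Finset.mem_univ j⟩)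
    have hdr : ∀ I : Idx n, d (Sum.inr I) = if j₀ ∉ I.1 then 1 else 0 := by
      intro I
      have := key (Sum.inr I)
      rw [Fintype.sum_sum_type] at this
      simp only [wt_inl_inr, wt_inr_inr, Hc, Finsupp.single_apply, reduceCtorEq,
        if_false, mul_ite, mul_one, mul_zero, mul_neg] at this
      rw [Finset.sum_ite_eq' Finset.univ I (fun I' => (d (Sum.inr I') : ℤ))] at this
      simp only [Finset.mem_univ, if_pos] at this
      have hfst : (∑ j : Fin (n-1), if j ∉ I.1 then -(d (Sum.inl j) : ℤ) else 0)
          = if j₀ ∉ I.1 then -1 else 0 := by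
        have : ∀ j : Fin (n-1), (if j ∉ I.1 then -(d (Sum.inl j) : ℤ) else 0)
            = if j = j₀ then (if j ∉ I.1 then -1 else 0) else 0 := by
          intro j
          rw [hdl j]
          by_cases hj : j = j₀ <;> by_cases hI : j ∉ I.1 <;> simp [hj, hI]
        rw [Finset.sum_congr rfl (fun j _ => this j), Finset.sum_ite_eq' Finset.univ j₀]
        simp
      rw [hfst] at this
      by_cases hI : j₀ ∉ I.1
      · rw [if_pos hI] at this ⊢; omega
      · rw [if_neg hI] at this ⊢; omega
    refine ⟨j₀, ?_, ?_⟩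
    · ext v
      cases v with
      | inl i => rw [mExp_inl, hdl]
      | inr I => rw [mExp_inr, hdr]
    · intro j' hj'
      have h1 : d (Sum.inl j') = 1 := by rw [hj', mExp_inl, if_pos rfl]
      have h2 := hdl j'
      by_contra hne
      rw [if_neg hne] at h2
      omega
  · rintro ⟨j, rfl, -⟩
    exact weight_mExp n j

end
end

section
/- For every λ ∈ k and every j ∈ {1,…,n−1}, the automorphism σ_λ satisfies σ_λ(m_j) = m_j + λ·∏_{I∈𝓘} x_I, where m_j := y_j·∏_{I∈𝓘, j∉I} x_I. (This is the key computation in the proof of Theorem 3.2: in the homogeneous coordinates m_1,…,m_{n−1}, the 𝔾_a-action is the uniform translation (m_1+λ : ⋯ : m_{n−1}+λ), so the fibers of the linear projection φ_n lift to 𝔾_a-orbits on Spec Cox(X_n).) -/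
open MvPolynomial

noncomputable section

variable (k : Type) [CommRing k]

/-- `z_i = ∏_{I∈𝓘, i∈I} x_I`. -/
def zz (n : ℕ) (i : Fin (n - 1)) : R k n :=
  ∏ I ∈ Finset.univ.filter (fun I : Idx n => i ∈ I.1), xx k n I

/-- The `k`-algebra endomorphism `σ_λ : R → R` with `σ_λ(x_I) = x_I` and
`σ_λ(y_i) = y_i + λ·z_i`. -/
def σₐ (n : ℕ) (lam : k) : R k n →ₐ[k] R k n :=
  aeval (Sum.elim (fun i => yy k n i + C lam * zz k n i) (fun I => xx k n I))

/-- The monomial `m_j = y_j·∏_{I∈𝓘, j∉I} x_I`. -/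
def mm (n : ℕ) (j : Fin (n - 1)) : R k n :=
  yy k n j * ∏ I ∈ Finset.univ.filter (fun I : Idx n => j ∉ I.1), xx k n I

/-- `σ_λ(m_j) = m_j + λ·∏_{I∈𝓘} x_I`; i.e. in the homogeneous coordinates
`m_1,…,m_{n−1}` the `𝔾_a`-action is the uniform translation. -/
theorem stmt8 (n : ℕ) (hn : 5 ≤ n) (lam : k) (j : Fin (n - 1)) :
    σₐ k n lam (mm k n j) = mm k n j + C lam * ∏ I : Idx n, xx k n I := by
  have hx : ∀ I : Idx n, σₐ k n lam (xx k n I) = xx k n I := fun I => by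
    simp [σₐ, xx]
  have hy : σₐ k n lam (yy k n j) = yy k n j + C lam * zz k n j := by
    simp [σₐ, yy, xx, zz]
  have hprod : zz k n j * ∏ I ∈ Finset.univ.filter (fun I : Idx n => j ∉ I.1), xx k n I
      = ∏ I : Idx n, xx k n I := by
    rw [zz, Finset.prod_filter_mul_prod_filter_not]
  simp only [mm, map_mul, map_prod, hy, hx]
  rw [add_mul, mul_assoc, hprod]

end
end

section
/- Let w = ∏_{I∈𝓘} x_I and let R_w be the localization of R away from w (so each x_I is invertible in R_w). The homomorphism τ extends to a k-algebra homomorphism τ_w : R_w → R_w[T] with τ_w(x_I) = x_I and τ_w(y_i) = y_i + T·z_i, and the invariant subring {g ∈ R_w : τ_w(g) = g} equals the k-subalgebra of R_w generated by {x_I, x_I^{−1} : I ∈ 𝓘} ∪ {y_i·z_i^{−1} − y_j·z_j^{−1} : 1 ≤ i < j ≤ n−1}. (After inverting all x_I the 𝔾_a-action becomes the uniform translation y_i/z_i ↦ y_i/z_i + λ, whose invariants are generated by the differences y_i/z_i − y_j/z_j.) -/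
open MvPolynomial

noncomputable section

variable (k : Type) [CommRing k]

/-- The `k`-algebra homomorphism `τ : R → R[T]` with `τ(x_I) = x_I` and
`τ(y_i) = y_i + T·z_i`.  An element `f ∈ R` is invariant iff `τ f = Polynomial.C f`. -/
def τₐ (n : ℕ) : R k n →ₐ[k] Polynomial (R k n) :=
  aeval (Sum.elim
    (fun i => Polynomial.C (yy k n i) + Polynomial.X * Polynomial.C (zz k n i))
    (fun I => Polynomial.C (xx k n I)))

/-- `w = ∏_{I∈𝓘} x_I`. -/
def ww (n : ℕ) : R k n := ∏ I : Idx n, xx k n I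

/-- `R_w`, the localization of `R` away from `w` (each `x_I` becomes invertible). -/
abbrev Rw (n : ℕ) : Type := Localization.Away (ww k n)

/-- The localization map `R → R_w`. -/
def loc (n : ℕ) : R k n →+* Rw k n := algebraMap (R k n) (Rw k n)

/-- The generating set `{x_I, x_I^{−1}} ∪ {y_i/z_i − y_j/z_j : i < j}` inside `R_w`. -/
def gens (n : ℕ) : Set (Rw k n) :=
  (Set.range fun I : Idx n => loc k n (xx k n I)) ∪
  (Set.range fun I : Idx n => Ring.inverse (loc k n (xx k n I))) ∪
  {r | ∃ i j : Fin (n - 1), i < j ∧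
    r = loc k n (yy k n i) * Ring.inverse (loc k n (zz k n i)) -
        loc k n (yy k n j) * Ring.inverse (loc k n (zz k n j))}

/-! ### Auxiliary lemmas -/

lemma eq_ring_inverse {A : Type*} [CommRing A] {a b : A} (ha : IsUnit a) (h : b * a = 1) :
    b = Ring.inverse a := by
  rw [← mul_one b, ← Ring.mul_inverse_cancel a ha, ← mul_assoc, h, one_mul]

lemma tau_C (n : ℕ) (c : k) : τₐ k n (C c) = Polynomial.C (C c) := by
  simp [τₐ, MvPolynomial.algebraMap_eq, Polynomial.algebraMap_apply]

lemma tau_x (n : ℕ) (I : Idx n) : τₐ k n (xx k n I) = Polynomial.C (xx k n I) := by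
  simp [τₐ, xx]

lemma tau_y (n : ℕ) (i : Fin (n - 1)) :
    τₐ k n (yy k n i)
      = Polynomial.C (yy k n i) + Polynomial.X * Polynomial.C (zz k n i) := by
  simp [τₐ, yy]

lemma tau_z (n : ℕ) (i : Fin (n - 1)) : τₐ k n (zz k n i) = Polynomial.C (zz k n i) := by
  rw [zz, map_prod]
  simp only [tau_x]
  rw [← map_prod, ← zz]

lemma tau_w (n : ℕ) : τₐ k n (ww k n) = Polynomial.C (ww k n) := by
  rw [ww, map_prod]
  simp only [tau_x]
  rw [← map_prod, ← ww]

lemma loc_w_isUnit (n : ℕ) : IsUnit (loc k n (ww k n)) :=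
  IsLocalization.Away.algebraMap_isUnit (ww k n)

lemma loc_x_isUnit (n : ℕ) (I : Idx n) : IsUnit (loc k n (xx k n I)) :=
  IsLocalization.Away.isUnit_of_dvd (ww k n)
    (Finset.dvd_prod_of_mem (fun J : Idx n => xx k n J) (Finset.mem_univ I))

lemma loc_z_isUnit (n : ℕ) (i : Fin (n - 1)) : IsUnit (loc k n (zz k n i)) :=
  IsLocalization.Away.isUnit_of_dvd (ww k n)
    (Finset.prod_dvd_prod_of_subset _ _ (fun J : Idx n => xx k n J) (Finset.subset_univ _))

set_option maxHeartbeats 1000000 in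
/-- `τ` extends to a `k`-algebra homomorphism `τ_w : R_w → R_w[T]` with
`τ_w(x_I) = x_I` and `τ_w(y_i) = y_i + T·z_i`, and the invariant subring
`{g ∈ R_w : τ_w(g) = g}` is the `k`-subalgebra generated by the `x_I`, their inverses,
and the differences `y_i·z_i^{−1} − y_j·z_j^{−1}`. -/
theorem stmt11 (n : ℕ) (hn : 5 ≤ n) :
    ∃ τw : Rw k n →+* Polynomial (Rw k n),
      (∀ c : k, τw (loc k n (C c)) = Polynomial.C (loc k n (C c))) ∧
      (∀ f : R k n, τw (loc k n f) = Polynomial.map (loc k n) (τₐ k n f)) ∧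
      (∀ I : Idx n, τw (loc k n (xx k n I)) = Polynomial.C (loc k n (xx k n I))) ∧
      (∀ i : Fin (n - 1), τw (loc k n (yy k n i)) =
        Polynomial.C (loc k n (yy k n i)) + Polynomial.X * Polynomial.C (loc k n (zz k n i))) ∧
      {g : Rw k n | τw g = Polynomial.C g} = (Algebra.adjoin k (gens k n) : Subalgebra k (Rw k n)) := by
  classical
  set φ : R k n →+* Polynomial (Rw k n) :=
    (Polynomial.mapRingHom (loc k n)).comp (τₐ k n).toRingHom with hφ
  have hφw : IsUnit (φ (ww k n)) := by
    have : φ (ww k n) = Polynomial.C (loc k n (ww k n)) := by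
      simp [hφ, tau_w]
    rw [this]
    exact (loc_w_isUnit k n).map Polynomial.C
  set τw : Rw k n →+* Polynomial (Rw k n) := IsLocalization.Away.lift (S := Rw k n) (g := φ) (ww k n) hφw with hτw
  have key : ∀ f : R k n, τw (loc k n f) = Polynomial.map (loc k n) (τₐ k n f) := by
    intro f
    exact IsLocalization.Away.lift_eq (S := Rw k n) (g := φ) (ww k n) hφw f
  have keyC : ∀ c : k, τw (loc k n (C c)) = Polynomial.C (loc k n (C c)) := by
    intro c; rw [key, tau_C]; simp
  have keyx : ∀ I : Idx n, τw (loc k n (xx k n I)) = Polynomial.C (loc k n (xx k n I)) := by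
    intro I; rw [key, tau_x]; simp
  have keyy : ∀ i : Fin (n - 1), τw (loc k n (yy k n i)) =
      Polynomial.C (loc k n (yy k n i)) + Polynomial.X * Polynomial.C (loc k n (zz k n i)) := by
    intro i; rw [key, tau_y]; simp
  have keyz : ∀ i : Fin (n - 1), τw (loc k n (zz k n i)) = Polynomial.C (loc k n (zz k n i)) := by
    intro i; rw [key, tau_z]; simp
  have keyw : τw (loc k n (ww k n)) = Polynomial.C (loc k n (ww k n)) := by
    rw [key, tau_w]; simp
  -- τw commutes with Ring.inverse on units whose τw-image is constant
  have keyinv : ∀ a : R k n, IsUnit (loc k n a) →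
      τw (loc k n a) = Polynomial.C (loc k n a) →
      τw (Ring.inverse (loc k n a)) = Polynomial.C (Ring.inverse (loc k n a)) := by
    intro a ha hτ
    have h1 : Ring.inverse (loc k n a) * loc k n a = 1 := Ring.inverse_mul_cancel _ ha
    have hu : IsUnit (Polynomial.C (loc k n a)) := ha.map Polynomial.C
    have h2 : τw (Ring.inverse (loc k n a)) * Polynomial.C (loc k n a) = 1 := by
      rw [← hτ, ← map_mul, h1, map_one]
    have h3 : Polynomial.C (Ring.inverse (loc k n a)) * Polynomial.C (loc k n a) = 1 := by
      rw [← map_mul, h1, map_one]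
    exact (eq_ring_inverse hu h2).trans (eq_ring_inverse hu h3).symm
  refine ⟨τw, keyC, key, keyx, keyy, ?_⟩
  -- algebraMap k (Rw k n) c = loc (C c)
  have halg : ∀ c : k, algebraMap k (Rw k n) c = loc k n (C c) := by
    intro c
    rw [IsScalarTower.algebraMap_apply k (R k n) (Rw k n) c]
    rfl
  set S := (Algebra.adjoin k (gens k n) : Subalgebra k (Rw k n)) with hS
  -- membership facts
  have hxS : ∀ I : Idx n, loc k n (xx k n I) ∈ S :=
    fun I => Algebra.subset_adjoin (Or.inl (Or.inl ⟨I, rfl⟩))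
  have hxiS : ∀ I : Idx n, Ring.inverse (loc k n (xx k n I)) ∈ S :=
    fun I => Algebra.subset_adjoin (Or.inl (Or.inr ⟨I, rfl⟩))
  have hzS : ∀ i : Fin (n - 1), loc k n (zz k n i) ∈ S := by
    intro i
    rw [zz, map_prod]
    exact prod_mem fun I _ => hxS I
  have hwinv_eq : Ring.inverse (loc k n (ww k n)) =
      ∏ I : Idx n, Ring.inverse (loc k n (xx k n I)) := by
    have hlocw : loc k n (ww k n) = ∏ I : Idx n, loc k n (xx k n I) :=
      map_prod (loc k n) (fun I : Idx n => xx k n I) Finset.univ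
    refine (eq_ring_inverse (loc_w_isUnit k n) ?_).symm
    rw [hlocw, ← Finset.prod_mul_distrib]
    rw [Finset.prod_congr rfl fun I _ => Ring.inverse_mul_cancel _ (loc_x_isUnit k n I)]
    simp
  have hwinvS : Ring.inverse (loc k n (ww k n)) ∈ S := by
    rw [hwinv_eq]; exact prod_mem fun I _ => hxiS I
  -- the basepoint
  have h0 : 0 < n - 1 := by omega
  set i0 : Fin (n - 1) := ⟨0, h0⟩ with hi0
  set v : Fin (n - 1) → Rw k n :=
    fun i => loc k n (yy k n i) * Ring.inverse (loc k n (zz k n i)) with hv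
  have hdiffS : ∀ i : Fin (n - 1), v i - v i0 ∈ S := by
    intro i
    by_cases h : i = i0
    · rw [h, sub_self]; exact zero_mem S
    · have hlt : i0 < i := by
        have hne : i.val ≠ 0 := fun hc => h (Fin.ext (by simp [hi0, hc]))
        exact Fin.lt_def.mpr (by simpa [hi0] using Nat.pos_of_ne_zero hne)
      have : v i0 - v i ∈ gens k n := Or.inr ⟨i0, i, hlt, rfl⟩
      have := Algebra.subset_adjoin (R := k) this
      simpa using neg_mem this
  have hzv : ∀ i : Fin (n - 1), loc k n (zz k n i) * v i = loc k n (yy k n i) := by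
    intro i
    simp only [hv]
    rw [mul_comm (loc k n (yy k n i)) _, ← mul_assoc,
      Ring.mul_inverse_cancel _ (loc_z_isUnit k n i), one_mul]
  -- the evaluation map at T = -v i0
  set ev : Polynomial (Rw k n) →+* Rw k n := Polynomial.evalRingHom (-(v i0)) with hev
  ext g
  simp only [Set.mem_setOf_eq, SetLike.mem_coe]
  constructor
  · -- invariant ⇒ in adjoin
    intro hg
    have hg2 : ev (τw g) = g := by rw [hg, hev]; simp
    rw [← hg2]
    -- show ev ∘ τw lands in S
    have main : ∀ h : Rw k n, ev (τw h) ∈ S := by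
      -- first: for polynomials f
      have mainR : ∀ f : R k n, ev (τw (loc k n f)) ∈ S := by
        intro f
        induction f using MvPolynomial.induction_on with
        | C c =>
          rw [keyC, hev]
          simpa [← halg c] using S.algebraMap_mem c
        | add p q hp hq =>
          rw [map_add, map_add, map_add]; exact add_mem hp hq
        | mul_X p s hp =>
          rw [map_mul, map_mul, map_mul]
          refine mul_mem hp ?_
          cases s with
          | inr I =>
            have : (X (Sum.inr I) : R k n) = xx k n I := rfl
            rw [this, keyx, hev]
            simpa using hxS I
          | inl i =>
            have : (X (Sum.inl i) : R k n) = yy k n i := rfl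
            rw [this, keyy i, hev]
            have hcalc : (Polynomial.evalRingHom (-(v i0)))
                (Polynomial.C (loc k n (yy k n i)) +
                  Polynomial.X * Polynomial.C (loc k n (zz k n i)))
                = loc k n (zz k n i) * (v i - v i0) := by
              simp only [map_add, map_mul, Polynomial.eval_C, Polynomial.coe_evalRingHom,
                Polynomial.eval_X, Polynomial.eval_add, Polynomial.eval_mul]
              rw [mul_sub, hzv i]
              ring
            rw [hcalc]
            exact mul_mem (hzS i) (hdiffS i)
      intro h
      obtain ⟨⟨f, s⟩, rfl⟩ := IsLocalization.mk'_surjective (S := Rw k n) (Submonoid.powers (ww k n)) h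
      show ev (τw (IsLocalization.mk' (Rw k n) f s)) ∈ S
      obtain ⟨m, hm⟩ := s.2
      have hmk : IsLocalization.mk' (Rw k n) f s
          = loc k n f * (Ring.inverse (loc k n (ww k n)))^m := by
        have hspec : IsLocalization.mk' (Rw k n) f s * loc k n s.1 = loc k n f :=
          IsLocalization.mk'_spec (Rw k n) f s
        have hs1 : loc k n s.1 = (loc k n (ww k n))^m := by rw [← hm, map_pow]
        have hinv : (loc k n (ww k n))^m * (Ring.inverse (loc k n (ww k n)))^m = 1 := by
          rw [← mul_pow, Ring.mul_inverse_cancel _ (loc_w_isUnit k n), one_pow]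
        calc IsLocalization.mk' (Rw k n) f s
            = IsLocalization.mk' (Rw k n) f s *
              ((loc k n (ww k n))^m * (Ring.inverse (loc k n (ww k n)))^m) := by
              rw [hinv, mul_one]
          _ = (IsLocalization.mk' (Rw k n) f s * loc k n s.1) *
              (Ring.inverse (loc k n (ww k n)))^m := by rw [hs1]; ring
          _ = loc k n f * (Ring.inverse (loc k n (ww k n)))^m := by rw [hspec]
      rw [hmk, map_mul, map_mul, map_pow, map_pow]
      refine mul_mem (mainR f) (pow_mem ?_ m)
      rw [keyinv (ww k n) (loc_w_isUnit k n) keyw, hev]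
      simpa using hwinvS
    exact main g
  · -- in adjoin ⇒ invariant
    intro hg
    induction hg using Algebra.adjoin_induction with
    | mem x hx =>
      rcases hx with (⟨I, rfl⟩ | ⟨I, rfl⟩) | ⟨i, j, hij, rfl⟩
      · exact keyx I
      · exact keyinv (xx k n I) (loc_x_isUnit k n I) (keyx I)
      · have hzi := keyinv (zz k n i) (loc_z_isUnit k n i) (keyz i)
        have hzj := keyinv (zz k n j) (loc_z_isUnit k n j) (keyz j)
        rw [map_sub, map_mul, map_mul, keyy i, keyy j, hzi, hzj]
        have hi1 : loc k n (zz k n i) * Ring.inverse (loc k n (zz k n i)) = 1 :=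
          Ring.mul_inverse_cancel _ (loc_z_isUnit k n i)
        have hj1 : loc k n (zz k n j) * Ring.inverse (loc k n (zz k n j)) = 1 :=
          Ring.mul_inverse_cancel _ (loc_z_isUnit k n j)
        have expand : ∀ (a b b' : Rw k n), b * b' = 1 →
            (Polynomial.C a + Polynomial.X * Polynomial.C b) * Polynomial.C b'
              = Polynomial.C (a * b') + Polynomial.X := by
          intro a b b' hbb
          rw [add_mul, mul_assoc, ← Polynomial.C_mul, ← Polynomial.C_mul, hbb,
            Polynomial.C_1, mul_one]
        rw [expand _ _ _ hi1, expand _ _ _ hj1, map_sub]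
        ring
    | algebraMap r =>
      rw [halg r, keyC r]
    | add x y hx hy ihx ihy =>
      rw [map_add, ihx, ihy, map_add]
    | mul x y hx hy ihx ihy =>
      rw [map_mul, ihx, ihy, map_mul]

end
end

section
/- Assume k is a field. Let p = (η, ξ) and p′ = (η′, ξ) be points of k^{n−1} × k^{𝓘} with the same x-coordinates ξ, and for i ∈ {1,…,n−1} write ζ_i = ∏_{I∈𝓘, i∈I} ξ_I. Suppose that ζ_{i_0} ≠ 0 for some i_0, and that for all i ≠ j the boundary invariants agree at p and p′: η_i·∏_{I∈𝓘, j∈I, i∉I} ξ_I − η_j·∏_{I∈𝓘, i∈I, j∉I} ξ_I = η′_i·∏_{I∈𝓘, j∈I, i∉I} ξ_I − η′_j·∏_{I∈𝓘, i∈I, j∉I} ξ_I. Then there exists λ ∈ k with η′_i = η_i + λ·ζ_i for all i ∈ {1,…,n−1}; i.e., p and p′ lie in the same orbit of the 𝔾_a-action (η, ξ) ↦ (η + λ·ζ(ξ), ξ). (The boundary invariants of Proposition 3.5 separate 𝔾_a-orbits off the fixed-point locus; this yields the torsor structure in the proof of Theorem 3.2.) -/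
noncomputable section

variable (k : Type) [Field k]

/-- `ζ_i(ξ) = ∏_{I∈𝓘, i∈I} ξ_I`, the value of the monomial `z_i` at the point `ξ`. -/
def ζval (n : ℕ) (ξ : Idx n → k) (i : Fin (n - 1)) : k :=
  ∏ I ∈ Finset.univ.filter (fun I : Idx n => i ∈ I.1), ξ I

/-- if two points `(η, ξ)` and `(η′, ξ)` of `Spec Cox(X_n) = k^{n−1} × k^𝓘`
with the same `x`-coordinates `ξ` lie off the fixed-point locus (some `ζ_{i_0}(ξ) ≠ 0`)
and all boundary invariants `B_{ij}` agree at them, then they lie on the same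
`𝔾_a`-orbit: `η′ = η + λ·ζ(ξ)` for some `λ ∈ k`. -/
theorem stmt13 (n : ℕ) (hn : 5 ≤ n) (η η' : Fin (n - 1) → k) (ξ : Idx n → k)
    (hfix : ∃ i₀ : Fin (n - 1), ζval k n ξ i₀ ≠ 0)
    (hB : ∀ i j : Fin (n - 1), i ≠ j →
      η i * ∏ I ∈ Finset.univ.filter (fun I : Idx n => j ∈ I.1 ∧ i ∉ I.1), ξ I -
        η j * ∏ I ∈ Finset.univ.filter (fun I : Idx n => i ∈ I.1 ∧ j ∉ I.1), ξ I =
      η' i * ∏ I ∈ Finset.univ.filter (fun I : Idx n => j ∈ I.1 ∧ i ∉ I.1), ξ I -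
        η' j * ∏ I ∈ Finset.univ.filter (fun I : Idx n => i ∈ I.1 ∧ j ∉ I.1), ξ I) :
    ∃ lam : k, ∀ i : Fin (n - 1), η' i = η i + lam * ζval k n ξ i := by
  obtain ⟨i₀, h0⟩ := hfix
  refine ⟨(η' i₀ - η i₀) / ζval k n ξ i₀, fun i => ?_⟩
  by_cases hi : i = i₀
  · subst hi
    field_simp
    ring
  · have hB' := hB i i₀ hi
    set A := ∏ I ∈ Finset.univ.filter (fun I : Idx n => i₀ ∈ I.1 ∧ i ∉ I.1), ξ I with hA
    set B := ∏ I ∈ Finset.univ.filter (fun I : Idx n => i ∈ I.1 ∧ i₀ ∉ I.1), ξ I with hBdef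
    have hz0 : ζval k n ξ i₀ =
        (∏ I ∈ Finset.univ.filter (fun I : Idx n => i₀ ∈ I.1 ∧ i ∈ I.1), ξ I) * A := by
      rw [ζval, ← Finset.prod_filter_mul_prod_filter_not
        (Finset.univ.filter fun I : Idx n => i₀ ∈ I.1) (fun I => i ∈ I.1), hA,
        Finset.filter_filter, Finset.filter_filter]
    have hzi : ζval k n ξ i =
        (∏ I ∈ Finset.univ.filter (fun I : Idx n => i₀ ∈ I.1 ∧ i ∈ I.1), ξ I) * B := by
      rw [ζval, ← Finset.prod_filter_mul_prod_filter_not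
        (Finset.univ.filter fun I : Idx n => i ∈ I.1) (fun I => i₀ ∈ I.1), hBdef,
        Finset.filter_filter, Finset.filter_filter]
      congr 1
      apply Finset.prod_congr _ fun _ _ => rfl
      ext I
      simp [and_comm]
    set C := ∏ I ∈ Finset.univ.filter (fun I : Idx n => i₀ ∈ I.1 ∧ i ∈ I.1), ξ I
    rw [hzi]
    rw [hz0] at h0 ⊢
    have hC0 : C ≠ 0 := left_ne_zero_of_mul h0
    have hA0 : A ≠ 0 := right_ne_zero_of_mul h0
    field_simp
    linear_combination (-1 : k) * hB'

end
end

section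
/- Let k be a commutative ring and m ≥ 1. For f ∈ k[u_1,…,u_m], one has f(u_1 + t, u_2 + t, …, u_m + t) = f in k[u_1,…,u_m,t] if and only if f lies in the k-subalgebra of k[u_1,…,u_m] generated by u_2 − u_1, u_3 − u_1, …, u_m − u_1. (Invariants of the uniform translation 𝔾_a-action are generated by the differences of the coordinates; this is used to compute the localized invariant ring in Corollary 1.3(2).) -/
open MvPolynomial

noncomputable section

variable (k : Type) [CommRing k]

/-- The `k`-algebra homomorphism `k[u_1,…,u_m] → k[u_1,…,u_m][t]` sending
`u_i ↦ u_i + t`, i.e. `f ↦ f(u_1 + t, …, u_m + t)`. -/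
def transl (m : ℕ) : MvPolynomial (Fin m) k →ₐ[k] Polynomial (MvPolynomial (Fin m) k) :=
  aeval (fun i : Fin m => Polynomial.C (X i) + Polynomial.X)

/-- `f(u_1+t,…,u_m+t) = f` iff `f` lies in the `k`-subalgebra generated by
the differences `u_2 − u_1, …, u_m − u_1` (invariants of the uniform translation
`𝔾_a`-action). -/
theorem stmt15 (m : ℕ) (hm : 1 ≤ m) (f : MvPolynomial (Fin m) k) :
    transl k m f = Polynomial.C f ↔
      f ∈ Algebra.adjoin k
        {g : MvPolynomial (Fin m) k |
          ∃ j : Fin m, j ≠ ⟨0, hm⟩ ∧ g = X j - X (⟨0, hm⟩ : Fin m)} := by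
  set i0 : Fin m := ⟨0, hm⟩ with hi0
  constructor
  · intro h
    -- evaluate `t ↦ -X i0`
    have key : aeval (fun i : Fin m => X i - X i0) f = f := by
      have h2 := congrArg (Polynomial.aeval (-(X i0) : MvPolynomial (Fin m) k)) h
      rw [Polynomial.aeval_C] at h2
      have heq : (((Polynomial.aeval (-(X i0) : MvPolynomial (Fin m) k)).restrictScalars k).comp
          (transl k m)) = aeval (fun i : Fin m => X i - X i0) := by
        ext i
        simp [transl, sub_eq_add_neg]
      have h3 := DFunLike.congr_fun heq f
      simp only [AlgHom.comp_apply, AlgHom.restrictScalars_apply] at h3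
      rw [h3] at h2
      simpa using h2
    rw [← key]
    have hmem : aeval (fun i : Fin m => (X i - X i0 : MvPolynomial (Fin m) k)) f ∈
        Algebra.adjoin k (Set.range fun i : Fin m => X i - X i0) := by
      rw [Algebra.adjoin_range_eq_range_aeval]
      exact ⟨f, rfl⟩
    refine Algebra.adjoin_le ?_ hmem
    rintro g ⟨i, rfl⟩
    by_cases hi : i = i0
    · subst hi
      simp only [sub_self]
      exact Subalgebra.zero_mem _
    · exact Algebra.subset_adjoin ⟨i, hi, rfl⟩
  · intro h
    induction h using Algebra.adjoin_induction with
    | mem g hg =>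
      obtain ⟨j, hj, rfl⟩ := hg
      simp [transl, map_sub]
    | algebraMap r => simp [transl, Polynomial.algebraMap_apply]
    | add x y _ _ hx hy => rw [map_add, hx, hy, map_add]
    | mul x y _ _ hx hy => rw [map_mul, hx, hy, map_mul]

end
end
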